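/- arXiv:math/0703450 — 3 statements merged into one kernel-verified Lean document; each statement's English description precedes it below -/
import Mathlib

section
/- Let ∇ be a metric connection on a Riemannian manifold and let Q ⊂ End(TM) correspond to a Lie algebra bundle 𝔰𝔭(1) ⊂ 𝔰𝔬(4n), with 𝔰𝔭(n) its centralizer in 𝔰𝔬(4n). If ∇ preserves the bundle 𝔰𝔭(n) ⊕ 𝔰𝔭(1), then ∇ preserves 𝔰𝔭(n) if and only if ∇ preserves 𝔰𝔭(1). (Abstract algebraic version: for a derivation D of 𝔰𝔬(4n)-valued sections preserving 𝔤 = 𝔰𝔭(n) ⊕ 𝔰𝔭(1), where 𝔰𝔭(n) is the centralizer of 𝔰𝔭(1), D preserves 𝔰𝔭(n) iff it preserves 𝔰𝔭(1).) -/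
open LinearMap

/-- Abstract algebraic version of the holonomy argument: on a Euclidean space `V`
(of dimension `4n`), let `𝔰𝔭(1)` be the span of a quaternionic triple `I, J, K` of
anti-commuting skew-adjoint complex structures with `K = IJ`, and let `𝔰𝔭(n)` be its
centralizer inside the skew-adjoint endomorphisms `𝔰𝔬(V)`.  If `D` is a derivation of
endomorphisms (with respect to the commutator bracket) preserving
`𝔤 = 𝔰𝔭(n) ⊕ 𝔰𝔭(1)`, then `D` preserves `𝔰𝔭(n)` if and only if it preserves `𝔰𝔭(1)`. -/
theorem stmt2 {V : Type*} [NormedAddCommGroup V] [InnerProductSpace ℝ V]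
    [FiniteDimensional ℝ V]
    (I J K : Module.End ℝ V)
    (hIskew : adjoint I = -I) (hJskew : adjoint J = -J) (hKskew : adjoint K = -K)
    (hI2 : I * I = -1) (hJ2 : J * J = -1) (hK2 : K * K = -1)
    (hIJ : I * J = K) (hJI : J * I = -K)
    (sp1 spn : Submodule ℝ (Module.End ℝ V))
    (hsp1 : sp1 = Submodule.span ℝ {I, J, K})
    (hspn : ∀ A : Module.End ℝ V,
      A ∈ spn ↔ (adjoint A = -A ∧ ∀ B ∈ sp1, A * B = B * A))
    (D : Module.End ℝ V →ₗ[ℝ] Module.End ℝ V)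
    (hder : ∀ A B : Module.End ℝ V,
      D (A * B - B * A) = (D A * B - B * D A) + (A * D B - D B * A))
    (hg : ∀ A ∈ spn ⊔ sp1, D A ∈ spn ⊔ sp1) :
    (∀ A ∈ spn, D A ∈ spn) ↔ (∀ A ∈ sp1, D A ∈ sp1) := by
  -- derived quaternion product relations
  have hIK : I * K = -J := by rw [← hIJ, ← mul_assoc, hI2, neg_one_mul]
  have hKJ : K * J = -I := by rw [← hIJ, mul_assoc, hJ2, mul_neg_one]
  have hKI : K * I = J := by rw [← hIJ, mul_assoc, hJI, mul_neg, hIK, neg_neg]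
  have hJK : J * K = I := by rw [← hIJ, ← mul_assoc, hJI, neg_mul, hKJ, neg_neg]
  -- generators belong to sp1
  have hImem : I ∈ sp1 := by
    rw [hsp1]; exact Submodule.subset_span (Set.mem_insert _ _)
  have hJmem : J ∈ sp1 := by
    rw [hsp1]
    exact Submodule.subset_span (Set.mem_insert_of_mem _ (Set.mem_insert _ _))
  have hKmem : K ∈ sp1 := by
    rw [hsp1]
    exact Submodule.subset_span
      (Set.mem_insert_of_mem _ (Set.mem_insert_of_mem _ rfl))
  -- elements of spn commute with elements of sp1
  have hcspn : ∀ A ∈ spn, ∀ B ∈ sp1, A * B = B * A := fun A hA => ((hspn A).mp hA).2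
  -- brackets of sp1-elements with generators stay in sp1
  have hbr : ∀ B, B ∈ ({I, J, K} : Set (Module.End ℝ V)) →
      ∀ q ∈ sp1, q * B - B * q ∈ sp1 := by
    intro B hB q hq
    rw [hsp1] at hq
    induction hq using Submodule.span_induction with
    | mem X hX =>
        rcases hX with rfl | rfl | rfl <;>
          rcases hB with rfl | rfl | rfl <;>
            simp only [hI2, hJ2, hK2, hIJ, hJI, hIK, hKI, hJK, hKJ, sub_self,
              sub_neg_eq_add] <;>
            first
              | exact zero_mem _
              | exact add_mem hImem hImem
              | exact add_mem hJmem hJmem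
              | exact add_mem hKmem hKmem
              | exact sub_mem (neg_mem hImem) hImem
              | exact sub_mem (neg_mem hJmem) hJmem
              | exact sub_mem (neg_mem hKmem) hKmem
    | zero => simp only [zero_mul, mul_zero, sub_self]; exact zero_mem sp1
    | add x y hx hy ihx ihy =>
        have : (x + y) * B - B * (x + y) = (x * B - B * x) + (y * B - B * y) := by
          noncomm_ring
        rw [this]; exact add_mem ihx ihy
    | smul r x hx ih =>
        have : (r • x) * B - B * (r • x) = r • (x * B - B * x) := by
          rw [smul_mul_assoc, mul_smul_comm, smul_sub]
        rw [this]; exact Submodule.smul_mem _ _ ih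
  -- representation of sp1-elements
  have hrep : ∀ q ∈ sp1, ∃ a b c : ℝ, q = a • I + b • J + c • K := by
    intro q hq
    rw [hsp1, Submodule.mem_span_insert] at hq
    obtain ⟨a, z, hz, rfl⟩ := hq
    rw [Submodule.mem_span_insert] at hz
    obtain ⟨b, w, hw, rfl⟩ := hz
    rw [Submodule.mem_span_singleton] at hw
    obtain ⟨c, rfl⟩ := hw
    exact ⟨a, b, c, by rw [add_assoc]⟩
  -- the centralizer of I and J inside sp1 is trivial
  have hcenter : ∀ q ∈ sp1, q * I = I * q → q * J = J * q → q = 0 := by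
    intro q hq hqi hqj
    obtain ⟨a, b, c, hqr⟩ := hrep q hq
    -- q = a • I
    have hqa : q = a • I := by
      have h1 : q * I + I * q = (-(2 * a)) • (1 : Module.End ℝ V) := by
        rw [hqr]
        simp only [add_mul, mul_add, smul_mul_assoc, mul_smul_comm, hI2, hJI,
          hKI, hIJ, hIK]
        module
      rw [← hqi] at h1
      have h2 : (2 : ℝ) • (q * I) = (2 : ℝ) • (-(a • (1 : Module.End ℝ V))) := by
        rw [two_smul, h1]; module
      have h3 : q * I = -(a • (1 : Module.End ℝ V)) :=
        smul_right_injective (Module.End ℝ V) two_ne_zero h2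
      have h4 := congrArg (· * I) h3
      simp only [mul_assoc, hI2, mul_neg_one, neg_mul, smul_mul_assoc, one_mul,
        neg_neg] at h4
      -- q * I * I = q * (I*I) = q * (-1) = -q ; RHS = -(a • I)
      rw [← neg_inj]
      calc -q = q * I * I := by rw [mul_assoc, hI2, mul_neg_one]
        _ = -(a • (1 : Module.End ℝ V)) * I := by rw [h3]
        _ = -(a • I) := by rw [neg_mul, smul_mul_assoc, one_mul]
    -- q = b • J
    have hqb : q = b • J := by
      have h1 : q * J + J * q = (-(2 * b)) • (1 : Module.End ℝ V) := by
        rw [hqr]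
        simp only [add_mul, mul_add, smul_mul_assoc, mul_smul_comm, hJ2, hJI,
          hKJ, hIJ, hJK]
        module
      rw [← hqj] at h1
      have h2 : (2 : ℝ) • (q * J) = (2 : ℝ) • (-(b • (1 : Module.End ℝ V))) := by
        rw [two_smul, h1]; module
      have h3 : q * J = -(b • (1 : Module.End ℝ V)) :=
        smul_right_injective (Module.End ℝ V) two_ne_zero h2
      rw [← neg_inj]
      calc -q = q * J * J := by rw [mul_assoc, hJ2, mul_neg_one]
        _ = -(b • (1 : Module.End ℝ V)) * J := by rw [h3]
        _ = -(b • J) := by rw [neg_mul, smul_mul_assoc, one_mul]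
    -- q * q = 0
    have e1 : q * q = (a * b) • K := by
      have h := congrArg₂ (· * ·) hqa hqb
      simpa only [smul_mul_assoc, mul_smul_comm, hIJ, smul_smul, mul_comm] using h
    have e2 : q * q = -((a * b) • K) := by
      have h := congrArg₂ (· * ·) hqb hqa
      simpa only [smul_mul_assoc, mul_smul_comm, hJI, smul_neg, smul_smul,
        mul_comm] using h
    have hqq : q * q = 0 := by
      have h2 : (2 : ℝ) • (q * q) = (2 : ℝ) • (0 : Module.End ℝ V) := by
        rw [smul_zero, two_smul]
        nth_rewrite 1 [e1]
        nth_rewrite 1 [e2]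
        exact add_neg_cancel _
      exact smul_right_injective (Module.End ℝ V) two_ne_zero h2
    have e3 : q * q = -((a * a) • (1 : Module.End ℝ V)) := by
      have h := congrArg₂ (· * ·) hqa hqa
      simpa only [smul_mul_assoc, mul_smul_comm, hI2, smul_smul, smul_neg] using h
    rw [hqq] at e3
    have e4 : (a * a) • (1 : Module.End ℝ V) = 0 := by
      rw [← neg_eq_zero, e3]
    rcases smul_eq_zero.mp e4 with h | h
    · rw [hqa, mul_self_eq_zero.mp h, zero_smul]
    · calc q = q * 1 := (mul_one q).symm
        _ = 0 := by rw [h, mul_zero]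
  -- D automatically preserves sp1
  have himg : ∀ Y Z W : Module.End ℝ V,
      Y ∈ ({I, J, K} : Set (Module.End ℝ V)) →
      Z ∈ ({I, J, K} : Set (Module.End ℝ V)) →
      Y * Z - Z * Y = W + W → D W ∈ sp1 := by
    intro Y Z W hYs hZs hW
    have hYmem : Y ∈ sp1 := by
      rw [hsp1]; exact Submodule.subset_span hYs
    have hZmem : Z ∈ sp1 := by
      rw [hsp1]; exact Submodule.subset_span hZs
    obtain ⟨pY, hpY, qY, hqY, hDY⟩ :=
      Submodule.mem_sup.mp (hg Y (Submodule.mem_sup_right hYmem))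
    obtain ⟨pZ, hpZ, qZ, hqZ, hDZ⟩ :=
      Submodule.mem_sup.mp (hg Z (Submodule.mem_sup_right hZmem))
    have key := hder Y Z
    rw [hW, map_add] at key
    have hc1 : D Y * Z - Z * D Y = qY * Z - Z * qY := by
      rw [← hDY, add_mul, mul_add, hcspn pY hpY Z hZmem]
      abel
    have hc2 : Y * D Z - D Z * Y = -(qZ * Y - Y * qZ) := by
      rw [← hDZ, add_mul, mul_add, hcspn pZ hpZ Y hYmem]
      abel
    rw [hc1, hc2] at key
    have hsum : D W + D W ∈ sp1 := by
      rw [key]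
      exact add_mem (hbr Z hZs qY hqY) (neg_mem (hbr Y hYs qZ hqZ))
    have : D W = (2 : ℝ)⁻¹ • (D W + D W) := by
      rw [← two_smul ℝ, smul_smul]; norm_num
    rw [this]
    exact Submodule.smul_mem _ _ hsum
  have hDI : D I ∈ sp1 := by
    refine himg J K I (by simp) (by simp) ?_
    rw [hJK, hKJ, sub_neg_eq_add]
  have hDJ : D J ∈ sp1 := by
    refine himg K I J (by simp) (by simp) ?_
    rw [hKI, hIK, sub_neg_eq_add]
  have hDK : D K ∈ sp1 := by
    refine himg I J K (by simp) (by simp) ?_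
    rw [hIJ, hJI, sub_neg_eq_add]
  -- hence D preserves sp1
  have hA1 : ∀ A ∈ sp1, D A ∈ sp1 := by
    intro A hA
    rw [hsp1] at hA
    induction hA using Submodule.span_induction with
    | mem X hX => rcases hX with rfl | rfl | rfl <;> assumption
    | zero => rw [map_zero]; exact zero_mem _
    | add x y hx hy ihx ihy => rw [map_add]; exact add_mem ihx ihy
    | smul r x hx ih => rw [map_smul]; exact Submodule.smul_mem _ _ ih
  -- and D preserves spn
  have hB1 : ∀ A ∈ spn, D A ∈ spn := by
    intro A hA
    obtain ⟨p, hp, q, hq, hDA⟩ :=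
      Submodule.mem_sup.mp (hg A (Submodule.mem_sup_left hA))
    have hqcomm : ∀ B ∈ sp1, q * B = B * q := by
      intro B hB
      have h0 : A * B - B * A = 0 := by
        rw [hcspn A hA B hB, sub_self]
      have key := hder A B
      rw [h0, map_zero] at key
      have h2 : A * D B - D B * A = 0 := by
        rw [hcspn A hA (D B) (hA1 B hB), sub_self]
      rw [h2, add_zero] at key
      -- key : 0 = D A * B - B * D A
      have h3 : D A * B = B * D A := by
        have := key.symm
        rwa [sub_eq_zero] at this
      have h4 : (p + q) * B = B * (p + q) := by rw [hDA, h3]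
      rw [add_mul, mul_add, hcspn p hp B hB] at h4
      exact add_left_cancel h4
    have hq0 : q = 0 :=
      hcenter q hq (hqcomm I hImem).symm.symm (hqcomm J hJmem)
    rw [← hDA, hq0, add_zero]
    exact hp
  exact ⟨fun _ => hA1, fun _ => hB1⟩
end

section
/- (Obata) On a Riemannian manifold with a quaternionic Hermitian triple (I, J, K) of anti-commuting orthogonal almost complex structures with K = IJ, and any metric connection ∇, the connection D = ∇ + (1/4)(A_I + A_J + A_K), where A_E = (∇E)E, is a metric connection satisfying DI = DJ = DK = 0. -/
open LinearMap

/-!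
Write `S = dI·I + dJ·J + dK·K`, the value of `A_I + A_J + A_K` at a vector `X`, where
`dE = ∇_X E`.  Differentiating the quaternionic relations lets one move `I` across every
`dE`; the commutator `[S, I]` then collapses to `-4 dI`, so `Γ = S / 4` satisfies
`dI + [Γ, I] = 0`.  The hypotheses are invariant under the cyclic permutation
`(I, J, K) ↦ (J, K, I)`, which fixes `S`, so the same computation gives `J` and `K`.
Each summand `dE·E` is a product of anticommuting skew-adjoint maps, hence skew-adjoint,
so `D = ∇ + Γ` is again metric.
-/

theorem quaternion_mul_table {R : Type*} [Ring R] {I J K : R}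
    (hI2 : I * I = -1) (hJ2 : J * J = -1) (hIJ : I * J = K) (hJI : J * I = -K) :
    J * K = I ∧ K * I = J ∧ K * J = -I ∧ I * K = -J := by
  subst hIJ
  refine ⟨?_, ?_, ?_, ?_⟩
  · rw [← mul_assoc, hJI, neg_mul, mul_assoc, hJ2]; noncomm_ring
  · rw [mul_assoc, hJI, mul_neg, ← mul_assoc, hI2]; noncomm_ring
  · rw [mul_assoc, hJ2]; noncomm_ring
  · rw [← mul_assoc, hI2]; noncomm_ring

theorem mul_mem_skewAdjoint_of_anticommute {R : Type*} [Ring R] [StarRing R] {a b : R}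
    (ha : a ∈ skewAdjoint R) (hb : b ∈ skewAdjoint R) (hab : a * b + b * a = 0) :
    a * b ∈ skewAdjoint R := by
  rw [skewAdjoint.mem_iff] at ha hb ⊢
  rw [star_mul, ha, hb, neg_mul_neg, eq_neg_of_add_eq_zero_right hab]

section ObataCorrection

variable {A : Type*} [Ring A] [Algebra ℝ A]

noncomputable def obataCorrection (I J K dI dJ dK : A) : A :=
  (1 / 4 : ℝ) • (dI * I + dJ * J + dK * K)

theorem obataCorrection_cycle (I J K dI dJ dK : A) :
    obataCorrection J K I dJ dK dI = obataCorrection I J K dI dJ dK := by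
  unfold obataCorrection
  congr 1
  abel

theorem add_commutator_obataCorrection_eq_zero {I J K dI dJ dK : A}
    (hI2 : I * I = -1) (hJ2 : J * J = -1) (hK2 : K * K = -1)
    (hIJ : I * J = K) (hJI : J * I = -K) (hKI : K * I = J)
    (hdI2 : dI * I + I * dI = 0) (hdIJ : dI * J + I * dJ = dK) :
    dI + (obataCorrection I J K dI dJ dK * I - I * obataCorrection I J K dI dJ dK) = 0 := by
  have hIdI : I * dI = -(dI * I) := eq_neg_of_add_eq_zero_right hdI2
  have hIdJ : I * dJ = dK - dI * J := eq_sub_of_add_eq' hdIJ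
  -- the Leibniz rule for `I * K = -J`, derived from the one for `I * J = K`
  have hIdK : I * dK = -(dI * K) - dJ := by
    rw [← hdIJ, mul_add, ← mul_assoc, hIdI, ← mul_assoc, hI2, neg_mul, mul_assoc, hIJ]
    noncomm_ring
  have hcomm :
      (dI * I + dJ * J + dK * K) * I - I * (dI * I + dJ * J + dK * K) = -(4 : ℝ) • dI :=
    calc (dI * I + dJ * J + dK * K) * I - I * (dI * I + dJ * J + dK * K)
        = dI * (I * I) + dJ * (J * I) + dK * (K * I)
            - ((I * dI) * I + (I * dJ) * J + (I * dK) * K) := by noncomm_ring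
      _ = dI * (I * I) + dJ * -K + dK * J
            - (-(dI * (I * I)) + (dK * J - dI * (J * J)) + (-(dI * (K * K)) - dJ * K)) := by
          rw [hJI, hKI, hIdI, hIdJ, hIdK]; noncomm_ring
      _ = -(4 : ℝ) • dI := by rw [hI2, hJ2, hK2]; simp only [mul_neg, mul_one]; module
  rw [obataCorrection, smul_mul_assoc, mul_smul_comm, ← smul_sub, hcomm]
  module

end ObataCorrection

/-- (Obata, pointwise algebraic form) Let `(I, J, K)` be a quaternionic Hermitian triple
of anti-commuting orthogonal (skew-adjoint) almost complex structures with `K = IJ` on a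
Riemannian manifold, and `∇` a metric connection.  The covariant derivatives
`dI = ∇_X I`, `dJ = ∇_X J`, `dK = ∇_X K` (in any direction `X`) are skew-adjoint and
satisfy the Leibniz constraints coming from the quaternionic relations.  Then the
connection `D = ∇ + ¼(A_I + A_J + A_K)`, with `A_E = (∇E)E`, is a metric connection
(its difference `Γ` with `∇` is skew-adjoint) for which `DI = DJ = DK = 0`, i.e.
`dE + [Γ, E] = 0` for `E = I, J, K`. -/
theorem stmt3 {V : Type*} [NormedAddCommGroup V] [InnerProductSpace ℝ V]
    [FiniteDimensional ℝ V]
    (I J K dI dJ dK : Module.End ℝ V)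
    (hIskew : adjoint I = -I) (hJskew : adjoint J = -J) (hKskew : adjoint K = -K)
    (hI2 : I * I = -1) (hJ2 : J * J = -1) (hK2 : K * K = -1)
    (hIJ : I * J = K) (hJI : J * I = -K)
    -- the covariant derivatives of `I, J, K` by a metric connection are skew-adjoint
    (hdIskew : adjoint dI = -dI) (hdJskew : adjoint dJ = -dJ) (hdKskew : adjoint dK = -dK)
    -- Leibniz rule applied to `I² = J² = K² = -1` :
    (hdI2 : dI * I + I * dI = 0) (hdJ2 : dJ * J + J * dJ = 0) (hdK2 : dK * K + K * dK = 0)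
    -- Leibniz rule applied to the quaternionic relations :
    (hdIJ : dI * J + I * dJ = dK)
    (hdJK : dJ * K + J * dK = dI)
    (hdKI : dK * I + K * dI = dJ) :
    let Γ : Module.End ℝ V := (1 / 4 : ℝ) • (dI * I + dJ * J + dK * K)
    adjoint Γ = -Γ ∧
    dI + (Γ * I - I * Γ) = 0 ∧
    dJ + (Γ * J - J * Γ) = 0 ∧
    dK + (Γ * K - K * Γ) = 0 := by
  intro Γ
  have hΓdef : Γ = obataCorrection I J K dI dJ dK := rfl
  obtain ⟨hJK, hKI, hKJ, hIK⟩ := quaternion_mul_table hI2 hJ2 hIJ hJI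
  have hskew : ∀ E : Module.End ℝ V, adjoint E = -E → E ∈ skewAdjoint (Module.End ℝ V) :=
    fun E hE => skewAdjoint.mem_iff.mpr ((star_eq_adjoint E).trans hE)
  have hΓ : Γ ∈ skewAdjoint (Module.End ℝ V) :=
    skewAdjoint.smul_mem _ <| add_mem (add_mem
      (mul_mem_skewAdjoint_of_anticommute (hskew _ hdIskew) (hskew _ hIskew) hdI2)
      (mul_mem_skewAdjoint_of_anticommute (hskew _ hdJskew) (hskew _ hJskew) hdJ2))
      (mul_mem_skewAdjoint_of_anticommute (hskew _ hdKskew) (hskew _ hKskew) hdK2)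
  refine ⟨(star_eq_adjoint Γ).symm.trans (skewAdjoint.mem_iff.mp hΓ), ?_, ?_, ?_⟩
  · rw [hΓdef]
    exact add_commutator_obataCorrection_eq_zero hI2 hJ2 hK2 hIJ hJI hKI hdI2 hdIJ
  · rw [hΓdef, ← obataCorrection_cycle]
    exact add_commutator_obataCorrection_eq_zero hJ2 hK2 hI2 hJK hKJ hIJ hdJ2 hdJK
  · rw [hΓdef, ← obataCorrection_cycle, ← obataCorrection_cycle]
    exact add_commutator_obataCorrection_eq_zero hK2 hI2 hJ2 hKI hIK hJK hdK2 hdKI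
end

section
/- With V = H ⊕ 𝒱, θ : H → 𝒱 an isometric isomorphism (extended by zero), I = θᵗ - θ, and 𝒥 an orthogonal complex structure on V preserving H and 𝒱 and commuting with θ on H composed appropriately so that J := 𝒥⊕(-𝒥) anti-commutes with θ (Jθ = -θJ), the endomorphism K = IJ satisfies K² = -1, K = -JI, and (I, J, K) is a quaternionic triple of orthogonal complex structures on V. -/
open LinearMap
open scoped RealInnerProductSpace

/-!
`θ` maps `H` isometrically onto `Hᗮ` and kills `Hᗮ`, so `θ² = 0` and `θᵗθ + θθᵗ` is the sum of the
orthogonal projections onto `H` and `Hᗮ`, i.e. the identity; hence `I = θᵗ - θ` squares to `-1`.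
For an endomorphism `T` with `T² = -1`, being an isometry (`TᵗT = 1`) is the same as being
skew-adjoint: `I` is skew-adjoint by construction and `J` is an isometry by hypothesis, so both are
orthogonal complex structures. Taking adjoints in `Jθ = -θJ` gives `Jθᵗ = -θᵗJ`, so `I` and `J`
anticommute, and the quaternion relations for `K = IJ` are then pure ring algebra.
-/

section Quaternion

variable {R : Type*} [Ring R] {i j : R}

theorem mul_eq_one_iff_eq_neg_of_mul_self_eq_neg_one {s t : R} (ht : t * t = -1) :
    s * t = 1 ↔ s = -t := by
  constructor
  · intro h
    calc s = s * (t * -t) := by rw [mul_neg, ht, neg_neg, mul_one]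
      _ = -t := by rw [← mul_assoc, h, one_mul]
  · rintro rfl
    rw [neg_mul, ht, neg_neg]

theorem mul_self_mul_eq_neg_one_of_anticomm (hi : i * i = -1) (hj : j * j = -1)
    (hij : i * j = -(j * i)) : (i * j) * (i * j) = -1 := by
  calc (i * j) * (i * j) = i * (j * i) * j := by noncomm_ring
    _ = -((i * i) * (j * j)) := by rw [← neg_eq_iff_eq_neg.mpr hij]; noncomm_ring
    _ = -1 := by rw [hi, hj]; noncomm_ring

theorem anticomm_self_mul_of_anticomm (hij : i * j = -(j * i)) :
    i * (i * j) = -((i * j) * i) := by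
  rw [mul_assoc i j i, ← neg_eq_iff_eq_neg.mpr hij, ← mul_assoc]
  noncomm_ring

theorem anticomm_mul_self_of_anticomm (hij : i * j = -(j * i)) :
    j * (i * j) = -((i * j) * j) := by
  rw [← mul_assoc, ← neg_eq_iff_eq_neg.mpr hij, neg_mul]

end Quaternion

section

variable {V : Type*} [NormedAddCommGroup V] [InnerProductSpace ℝ V]

structure IsIsometryOntoOrthogonal (H : Submodule ℝ V) (θ : V →ₗ[ℝ] V) : Prop where
  map_eq : H.map θ = Hᗮ
  norm_map : ∀ h ∈ H, ‖θ h‖ = ‖h‖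
  map_orthogonal : ∀ v ∈ Hᗮ, θ v = 0

namespace IsIsometryOntoOrthogonal

variable {H : Submodule ℝ V} {θ : V →ₗ[ℝ] V}

theorem inner_map_map (hθ : IsIsometryOntoOrthogonal H θ) {a b : V} (ha : a ∈ H) (hb : b ∈ H) :
    ⟪θ a, θ b⟫ = ⟪a, b⟫ :=
  (LinearMap.norm_map_iff_inner_map_map (θ.domRestrict H)).mp
    (fun h => hθ.norm_map h h.2) ⟨a, ha⟩ ⟨b, hb⟩

end IsIsometryOntoOrthogonal

variable [FiniteDimensional ℝ V]

theorem LinearMap.norm_map_iff_adjoint_comp_self {W : Type*} [NormedAddCommGroup W]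
    [InnerProductSpace ℝ W] [FiniteDimensional ℝ W] (T : V →ₗ[ℝ] W) :
    (∀ v, ‖T v‖ = ‖v‖) ↔ adjoint T ∘ₗ T = LinearMap.id := by
  rw [LinearMap.norm_map_iff_inner_map_map T]
  constructor
  · intro h
    ext v
    exact ext_inner_right ℝ fun w => by rw [comp_apply, adjoint_inner_left, h, id_apply]
  · intro h v w
    rw [← adjoint_inner_left, ← comp_apply, h, id_apply]

theorem LinearMap.adjoint_eq_neg_iff_norm_map {T : V →ₗ[ℝ] V} (hT : T * T = -1) :
    adjoint T = -T ↔ ∀ v, ‖T v‖ = ‖v‖ := by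
  rw [norm_map_iff_adjoint_comp_self, ← mul_eq_one_iff_eq_neg_of_mul_self_eq_neg_one hT]
  rfl

theorem LinearMap.anticomm_adjoint_of_adjoint_eq_neg {J θ : V →ₗ[ℝ] V} (hJ : adjoint J = -J)
    (hJθ : J * θ = -(θ * J)) : J * adjoint θ = -(adjoint θ * J) := by
  have h := congrArg adjoint hJθ
  simp only [map_neg] at h
  change adjoint (J ∘ₗ θ) = -adjoint (θ ∘ₗ J) at h
  rw [adjoint_comp, adjoint_comp, hJ] at h
  change adjoint θ * -J = -(-J * adjoint θ) at h
  rw [mul_neg, neg_mul, neg_neg] at h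
  exact h.symm

namespace IsIsometryOntoOrthogonal

variable {H : Submodule ℝ V} {θ : V →ₗ[ℝ] V}

theorem apply_mem_orthogonal (hθ : IsIsometryOntoOrthogonal H θ) (v : V) : θ v ∈ Hᗮ := by
  obtain ⟨a, ha, b, hb, rfl⟩ := H.exists_add_mem_mem_orthogonal v
  rw [map_add, hθ.map_orthogonal b hb, add_zero, ← hθ.map_eq]
  exact Submodule.mem_map_of_mem ha

theorem comp_self (hθ : IsIsometryOntoOrthogonal H θ) : θ ∘ₗ θ = 0 := by
  ext v
  exact hθ.map_orthogonal _ (hθ.apply_mem_orthogonal v)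

theorem adjoint_apply_of_mem (hθ : IsIsometryOntoOrthogonal H θ) {a : V} (ha : a ∈ H) :
    adjoint θ a = 0 :=
  ext_inner_right ℝ fun v => by
    rw [adjoint_inner_left, inner_zero_left]
    exact Submodule.inner_right_of_mem_orthogonal ha (hθ.apply_mem_orthogonal v)

theorem adjoint_apply_apply_of_mem (hθ : IsIsometryOntoOrthogonal H θ) {a : V} (ha : a ∈ H) :
    adjoint θ (θ a) = a :=
  ext_inner_right ℝ fun v => by
    obtain ⟨b, hb, c, hc, rfl⟩ := H.exists_add_mem_mem_orthogonal v
    rw [adjoint_inner_left, map_add, hθ.map_orthogonal c hc, add_zero, inner_add_right,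
      hθ.inner_map_map ha hb, Submodule.inner_right_of_mem_orthogonal ha hc, add_zero]

theorem apply_adjoint_apply_of_mem_orthogonal (hθ : IsIsometryOntoOrthogonal H θ) {b : V}
    (hb : b ∈ Hᗮ) : θ (adjoint θ b) = b := by
  rw [← hθ.map_eq] at hb
  obtain ⟨a, ha, rfl⟩ := hb
  rw [hθ.adjoint_apply_apply_of_mem ha]

theorem adjoint_comp_add_comp_adjoint (hθ : IsIsometryOntoOrthogonal H θ) :
    adjoint θ ∘ₗ θ + θ ∘ₗ adjoint θ = LinearMap.id := by
  ext v
  obtain ⟨a, ha, b, hb, rfl⟩ := H.exists_add_mem_mem_orthogonal v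
  simp only [LinearMap.add_apply, comp_apply, id_apply, map_add, hθ.adjoint_apply_apply_of_mem ha,
    hθ.map_orthogonal b hb, hθ.adjoint_apply_of_mem ha, hθ.apply_adjoint_apply_of_mem_orthogonal hb,
    map_zero]
  abel

theorem adjoint_sub_mul_self (hθ : IsIsometryOntoOrthogonal H θ) :
    (adjoint θ - θ) * (adjoint θ - θ) = -1 := by
  have hθθ : θ * θ = 0 := hθ.comp_self
  have hθθ' : adjoint θ * adjoint θ = 0 := by
    rw [← map_zero adjoint, ← hθθ]
    exact (adjoint_comp θ θ).symm
  have hsum : adjoint θ * θ + θ * adjoint θ = 1 := hθ.adjoint_comp_add_comp_adjoint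
  rw [sub_mul, mul_sub, mul_sub, hθθ, hθθ', ← hsum]
  abel

end IsIsometryOntoOrthogonal

end

theorem stmt15_general {V : Type*} [NormedAddCommGroup V] [InnerProductSpace ℝ V]
    [FiniteDimensional ℝ V]
    (H 𝒱 : Submodule ℝ V) (h𝒱 : 𝒱 = Hᗮ)
    (θ : V →ₗ[ℝ] V)
    (hθH : Submodule.map θ H = 𝒱)
    (hθiso : ∀ h ∈ H, ‖θ h‖ = ‖h‖)
    (hθ𝒱 : ∀ v ∈ 𝒱, θ v = 0)
    (J : V →ₗ[ℝ] V)
    (hJ2 : J ∘ₗ J = -LinearMap.id)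
    (hJiso : ∀ v : V, ‖J v‖ = ‖v‖)
    (hJθ : J ∘ₗ θ = -(θ ∘ₗ J)) :
    let I : V →ₗ[ℝ] V := adjoint θ - θ
    let K : V →ₗ[ℝ] V := I ∘ₗ J
    (K ∘ₗ K = -LinearMap.id) ∧
    (K = -(J ∘ₗ I)) ∧
    (I ∘ₗ I = -LinearMap.id) ∧
    (∀ v : V, ‖I v‖ = ‖v‖) ∧
    (∀ v : V, ‖K v‖ = ‖v‖) ∧
    (I ∘ₗ J = -(J ∘ₗ I)) ∧ (J ∘ₗ K = -(K ∘ₗ J)) ∧ (I ∘ₗ K = -(K ∘ₗ I)) := by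
  intro I K
  subst h𝒱
  have hθ : IsIsometryOntoOrthogonal H θ := ⟨hθH, hθiso, hθ𝒱⟩
  have hI2 : I * I = -1 := hθ.adjoint_sub_mul_self
  have hIadj : adjoint I = -I := by
    rw [map_sub, adjoint_adjoint, neg_sub]
  have hIiso : ∀ v, ‖I v‖ = ‖v‖ := (adjoint_eq_neg_iff_norm_map hI2).mp hIadj
  have hJadj : adjoint J = -J := (adjoint_eq_neg_iff_norm_map hJ2).mpr hJiso
  have hIJ : I * J = -(J * I) := by
    change (adjoint θ - θ) * J = -(J * (adjoint θ - θ))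
    rw [sub_mul, mul_sub, anticomm_adjoint_of_adjoint_eq_neg hJadj hJθ,
      show θ * J = -(J * θ) from neg_eq_iff_eq_neg.mp hJθ.symm]
    abel
  exact ⟨mul_self_mul_eq_neg_one_of_anticomm hI2 hJ2 hIJ, hIJ, hI2, hIiso,
    fun v => (hIiso _).trans (hJiso v), hIJ, anticomm_mul_self_of_anticomm hIJ,
    anticomm_self_mul_of_anticomm hIJ⟩

/-- With `V = H ⊕ 𝒱` an orthogonal splitting, `θ : H → 𝒱` an isometric isomorphism
(extended by zero on `𝒱`), `I = θᵗ - θ`, and `J` an orthogonal complex structure on `V`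
preserving `H` and `𝒱` and anti-commuting with `θ` (`Jθ = -θJ`), the endomorphism
`K = IJ` satisfies `K² = -1`, `K = -JI`, and `(I, J, K)` is a quaternionic triple of
orthogonal (anti-commuting) complex structures on `V`. -/
theorem stmt15 {V : Type*} [NormedAddCommGroup V] [InnerProductSpace ℝ V]
    [FiniteDimensional ℝ V]
    (H 𝒱 : Submodule ℝ V) (h𝒱 : 𝒱 = Hᗮ)
    (θ : V →ₗ[ℝ] V)
    (hθH : Submodule.map θ H = 𝒱)
    (hθiso : ∀ h ∈ H, ‖θ h‖ = ‖h‖)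
    (hθ𝒱 : ∀ v ∈ 𝒱, θ v = 0)
    (J : V →ₗ[ℝ] V)
    (hJ2 : J ∘ₗ J = -LinearMap.id)
    (hJiso : ∀ v : V, ‖J v‖ = ‖v‖)
    (hJH : ∀ h ∈ H, J h ∈ H)
    (hJ𝒱 : ∀ v ∈ 𝒱, J v ∈ 𝒱)
    (hJθ : J ∘ₗ θ = -(θ ∘ₗ J)) :
    let I : V →ₗ[ℝ] V := adjoint θ - θ
    let K : V →ₗ[ℝ] V := I ∘ₗ J
    (K ∘ₗ K = -LinearMap.id) ∧
    (K = -(J ∘ₗ I)) ∧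
    (I ∘ₗ I = -LinearMap.id) ∧
    (∀ v : V, ‖I v‖ = ‖v‖) ∧
    (∀ v : V, ‖K v‖ = ‖v‖) ∧
    (I ∘ₗ J = -(J ∘ₗ I)) ∧ (J ∘ₗ K = -(K ∘ₗ J)) ∧ (I ∘ₗ K = -(K ∘ₗ I)) :=
  stmt15_general H 𝒱 h𝒱 θ hθH hθiso hθ𝒱 J hJ2 hJiso hJθ
end
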